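/- arXiv:gr-qc/0203021 — 3 statements merged into one kernel-verified Lean document; each statement's English description precedes it below -/
import Mathlib

section
/- Let B_a ⊂ ℝ³ and E^{m,α}(B_a) = {f₁ + r f₂ : f₁, f₂ ∈ C^{m,α}(B̄_a)}. If f ∈ E^{m,α}(B_a) and f(x) ≠ 0 for all x ∈ B̄_a, then 1/f ∈ E^{m,α}(B_a). -/
open Metric Real NNReal

noncomputable section

abbrev E3 := EuclideanSpace ℝ (Fin 3)

/-- The Hölder space C^{m,α}(s): m-times continuously differentiable on `s`
with α-Hölder continuous m-th derivatives. -/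
def Holder (m : ℕ) (α : ℝ≥0) (s : Set E3) (f : E3 → ℝ) : Prop :=
  ContDiffOn ℝ m f s ∧
    ∃ C : ℝ≥0, HolderOnWith C α (iteratedFDerivWithin ℝ m f s) s

/-- The space E^{m,α}(B_a): functions of the form f₁ + r f₂ with
f₁, f₂ ∈ C^{m,α}(B̄_a), where r(x) = |x|. -/
def Em (m : ℕ) (α : ℝ≥0) (a : ℝ) (f : E3 → ℝ) : Prop :=
  ∃ f₁ f₂ : E3 → ℝ, Holder m α (closedBall 0 a) f₁ ∧ Holder m α (closedBall 0 a) f₂ ∧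
    ∀ x ∈ closedBall (0 : E3) a, f x = f₁ x + ‖x‖ * f₂ x

/-!
Near the origin, `1/f = (f₁ - r f₂) / (f₁² - r² f₂²)`: the denominator is `C^{m,α}` because `r²`
is smooth, and it does not vanish near `0`, where it equals `f(0)²`. Away from the origin `r`
agrees with the smooth function `(1 - χ₀) r` for a bump `χ₀` at `0`, so there `f` is a `C^{m,α}`
function and so is its inverse. A partition of unity glues the two representations. To keep
denominators nonvanishing on the whole ball, only functions `u² + c` are inverted, with `c ≥ 0` a
smooth cutoff vanishing where the inverse is used. Closure of `C^{m,α}` under bilinear maps and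
inverses is proved by induction on `m` through the formulas for their derivatives.
-/

open scoped ContDiff

section HolderOnWith

variable {X Y Z : Type*} [PseudoEMetricSpace X] [PseudoEMetricSpace Y] [PseudoEMetricSpace Z]
  {C r : ℝ≥0} {s : Set X} {f g : X → Y}

theorem holderOnWith_congr (hfg : Set.EqOn f g s) :
    HolderOnWith C r f s ↔ HolderOnWith C r g s := by
  simp only [HolderOnWith]
  exact forall₂_congr fun x hx => forall₂_congr fun y hy => by rw [hfg hx, hfg hy]

theorem Isometry.holderOnWith_comp_iff {e : Y → Z} (he : Isometry e) :
    HolderOnWith C r (e ∘ f) s ↔ HolderOnWith C r f s := by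
  simp only [HolderOnWith, Function.comp_apply, he.edist_eq]

theorem HolderOnWith.add {Y : Type*} [SeminormedAddCommGroup Y] {C' : ℝ≥0} {f g : X → Y}
    (hf : HolderOnWith C r f s) (hg : HolderOnWith C' r g s) :
    HolderOnWith (C + C') r (f + g) s := by
  intro x hx y hy
  grw [Pi.add_apply, Pi.add_apply, edist_add_add_le, hf x hx y hy, hg x hx y hy, ENNReal.coe_add,
    add_mul]

theorem HolderOnWith.bilinear {F G H : Type*} [NormedAddCommGroup F] [NormedSpace ℝ F]
    [NormedAddCommGroup G] [NormedSpace ℝ G] [NormedAddCommGroup H] [NormedSpace ℝ H]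
    (B : F →L[ℝ] G →L[ℝ] H) {f : X → F} {g : X → G} {Cf Cg Mf Mg : ℝ≥0}
    (hf : HolderOnWith Cf r f s) (hg : HolderOnWith Cg r g s)
    (hMf : ∀ x ∈ s, ‖f x‖₊ ≤ Mf) (hMg : ∀ x ∈ s, ‖g x‖₊ ≤ Mg) :
    HolderOnWith (‖B‖₊ * (Cf * Mg + Mf * Cg)) r (fun x => B (f x) (g x)) s := by
  intro x hx y hy
  have hsplit : B (f x) (g x) - B (f y) (g y) = B (f x - f y) (g x) + B (f y) (g x - g y) := by
    simp only [map_sub, sub_apply]; abel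
  calc edist (B (f x) (g x)) (B (f y) (g y))
      ≤ ‖B‖ₑ * edist (f x) (f y) * ‖g x‖ₑ + ‖B‖ₑ * ‖f y‖ₑ * edist (g x) (g y) := by
        rw [edist_eq_enorm_sub, hsplit, edist_eq_enorm_sub, edist_eq_enorm_sub]
        exact (enorm_add_le _ _).trans (add_le_add (B.le_opENorm₂ _ _) (B.le_opENorm₂ _ _))
    _ ≤ ‖B‖ₑ * (Cf * edist x y ^ (r : ℝ)) * Mg + ‖B‖ₑ * Mf * (Cg * edist x y ^ (r : ℝ)) := by
        gcongr
        exacts [hf x hx y hy, ENNReal.coe_le_coe.2 (hMg x hx), ENNReal.coe_le_coe.2 (hMf y hy),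
          hg x hx y hy]
    _ = ↑(‖B‖₊ * (Cf * Mg + Mf * Cg)) * edist x y ^ (r : ℝ) := by
        simp only [ENNReal.coe_mul, ENNReal.coe_add, enorm_eq_nnnorm]; ring

theorem HolderOnWith.inv {𝕜 : Type*} [NormedField 𝕜] {f : X → 𝕜} {ε : ℝ≥0} (hε : 0 < ε)
    (hf : HolderOnWith C r f s) (hfε : ∀ x ∈ s, ε ≤ ‖f x‖₊) :
    HolderOnWith (ε⁻¹ * ε⁻¹ * C) r (fun x => (f x)⁻¹) s := by
  intro x hx y hy
  have hx0 : f x ≠ 0 := nnnorm_pos.1 (hε.trans_le (hfε x hx))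
  have hy0 : f y ≠ 0 := nnnorm_pos.1 (hε.trans_le (hfε y hy))
  have hbound : ‖(f x)⁻¹ - (f y)⁻¹‖₊ ≤ ε⁻¹ * ε⁻¹ * ‖f y - f x‖₊ := by
    rw [inv_sub_inv' hx0 hy0, nnnorm_mul, nnnorm_mul, nnnorm_inv, nnnorm_inv, mul_right_comm]
    gcongr
    exacts [hfε x hx, hfε y hy]
  calc edist (f x)⁻¹ (f y)⁻¹ ≤ ↑(ε⁻¹ * ε⁻¹) * edist (f y) (f x) := by
        simp only [edist_eq_enorm_sub, enorm_eq_nnnorm, ← ENNReal.coe_mul, ENNReal.coe_le_coe]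
        exact hbound
    _ ≤ ↑(ε⁻¹ * ε⁻¹) * (C * edist x y ^ (r : ℝ)) := by rw [edist_comm]; gcongr; exact hf x hx y hy
    _ = ↑(ε⁻¹ * ε⁻¹ * C) * edist x y ^ (r : ℝ) := by push_cast; ring

end HolderOnWith

theorem IsCompact.exists_forall_nnnorm_le {X Y : Type*} [TopologicalSpace X]
    [SeminormedAddCommGroup Y] {s : Set X} (hs : IsCompact s) {f : X → Y}
    (hf : ContinuousOn f s) : ∃ M : ℝ≥0, ∀ x ∈ s, ‖f x‖₊ ≤ M := by
  obtain ⟨M, hM⟩ := hs.exists_bound_of_continuousOn hf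
  exact ⟨M.toNNReal, fun x hx => by rw [← norm_toNNReal]; exact Real.toNNReal_mono (hM x hx)⟩

section ContDiffHolderOn

variable {E F G H : Type} [NormedAddCommGroup E] [NormedSpace ℝ E]
  [NormedAddCommGroup F] [NormedSpace ℝ F] [NormedAddCommGroup G] [NormedSpace ℝ G]
  [NormedAddCommGroup H] [NormedSpace ℝ H] {m : ℕ} {α : ℝ≥0} {s : Set E} {f g : E → F}

/-- `Holder` with an arbitrary normed codomain, so that it applies to derivatives. The spaces live
in `Type` so that the induction in `ContDiffHolderOn.bilinear` can pass to spaces of linear maps. -/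
def ContDiffHolderOn (m : ℕ) (α : ℝ≥0) (f : E → F) (s : Set E) : Prop :=
  ContDiffOn ℝ m f s ∧ ∃ C : ℝ≥0, HolderOnWith C α (iteratedFDerivWithin ℝ m f s) s

theorem holderOnWith_iteratedFDerivWithin_zero_iff {C : ℝ≥0} :
    HolderOnWith C α (iteratedFDerivWithin ℝ 0 f s) s ↔ HolderOnWith C α f s := by
  rw [iteratedFDerivWithin_zero_eq_comp]
  exact (LinearIsometryEquiv.isometry _).holderOnWith_comp_iff

theorem holderOnWith_iteratedFDerivWithin_succ_iff (hs : UniqueDiffOn ℝ s) {C : ℝ≥0} :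
    HolderOnWith C α (iteratedFDerivWithin ℝ (m + 1) f s) s ↔
      HolderOnWith C α (iteratedFDerivWithin ℝ m (fderivWithin ℝ f s) s) s := by
  rw [holderOnWith_congr fun x hx => iteratedFDerivWithin_succ_eq_comp_right hs hx]
  exact (LinearIsometryEquiv.isometry _).holderOnWith_comp_iff

theorem contDiffHolderOn_zero :
    ContDiffHolderOn 0 α f s ↔ ContinuousOn f s ∧ ∃ C : ℝ≥0, HolderOnWith C α f s := by
  simp only [ContDiffHolderOn, CharP.cast_eq_zero, contDiffOn_zero,
    holderOnWith_iteratedFDerivWithin_zero_iff]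

theorem contDiffHolderOn_succ_iff (hs : UniqueDiffOn ℝ s) :
    ContDiffHolderOn (m + 1) α f s ↔
      DifferentiableOn ℝ f s ∧ ContDiffHolderOn m α (fderivWithin ℝ f s) s := by
  simp only [ContDiffHolderOn, Nat.cast_add, Nat.cast_one, contDiffOn_succ_iff_fderivWithin hs,
    holderOnWith_iteratedFDerivWithin_succ_iff hs]
  simp [and_assoc]

theorem ContDiffHolderOn.congr (h : ContDiffHolderOn m α f s) (hfg : Set.EqOn g f s) :
    ContDiffHolderOn m α g s :=
  ⟨h.1.congr hfg, h.2.imp fun _ hC =>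
    (holderOnWith_congr fun _ hx => iteratedFDerivWithin_congr hfg hx m).2 hC⟩

theorem ContDiffHolderOn.add (hs : UniqueDiffOn ℝ s) (hf : ContDiffHolderOn m α f s)
    (hg : ContDiffHolderOn m α g s) : ContDiffHolderOn m α (fun x => f x + g x) s := by
  obtain ⟨Cf, hCf⟩ := hf.2
  obtain ⟨Cg, hCg⟩ := hg.2
  refine ⟨hf.1.add hg.1, Cf + Cg, (holderOnWith_congr fun x hx => ?_).2 (hCf.add hCg)⟩
  exact iteratedFDerivWithin_add_apply (hf.1 x hx) (hg.1 x hx) hs hx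

theorem ContDiffOn.exists_lipschitzOnWith_of_isCompact (hf : ContDiffOn ℝ 1 f s)
    (hs : UniqueDiffOn ℝ s) (hconv : Convex ℝ s) (hcomp : IsCompact s) :
    ∃ K, LipschitzOnWith K f s := by
  obtain ⟨M, hM⟩ := hcomp.exists_forall_nnnorm_le (hf.continuousOn_fderivWithin hs le_rfl)
  exact ⟨M, hconv.lipschitzOnWith_of_nnnorm_fderivWithin_le (hf.differentiableOn one_ne_zero) hM⟩

theorem ContDiffOn.contDiffHolderOn (hf : ContDiffOn ℝ (m + 1) f s) (hs : UniqueDiffOn ℝ s)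
    (hconv : Convex ℝ s) (hcomp : IsCompact s) (hα : α ≤ 1) : ContDiffHolderOn m α f s := by
  induction m generalizing F with
  | zero =>
    obtain ⟨K, hK⟩ := (by simpa using hf : ContDiffOn ℝ 1 f s).exists_lipschitzOnWith_of_isCompact
      hs hconv hcomp
    exact contDiffHolderOn_zero.2 ⟨hf.continuousOn,
      HolderOnWith.exists_holderOnWith_of_le ⟨K, holderOnWith_one.2 hK⟩ hα hcomp.isBounded⟩
  | succ m ih =>
    obtain ⟨hdiff, -, hf'⟩ := (contDiffOn_succ_iff_fderivWithin hs).1 hf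
    exact (contDiffHolderOn_succ_iff hs).2 ⟨hdiff, ih (by exact_mod_cast hf')⟩

theorem ContDiffHolderOn.of_succ (h : ContDiffHolderOn (m + 1) α f s) (hs : UniqueDiffOn ℝ s)
    (hconv : Convex ℝ s) (hcomp : IsCompact s) (hα : α ≤ 1) : ContDiffHolderOn m α f s :=
  h.1.contDiffHolderOn hs hconv hcomp hα

theorem ContDiffHolderOn.bilinear (hs : UniqueDiffOn ℝ s) (hconv : Convex ℝ s)
    (hcomp : IsCompact s) (hα : α ≤ 1) (B : F →L[ℝ] G →L[ℝ] H) {f : E → F} {g : E → G}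
    (hf : ContDiffHolderOn m α f s) (hg : ContDiffHolderOn m α g s) :
    ContDiffHolderOn m α (fun x => B (f x) (g x)) s := by
  induction m generalizing F G H with
  | zero =>
    obtain ⟨hfc, Cf, hCf⟩ := contDiffHolderOn_zero.1 hf
    obtain ⟨hgc, Cg, hCg⟩ := contDiffHolderOn_zero.1 hg
    obtain ⟨Mf, hMf⟩ := hcomp.exists_forall_nnnorm_le hfc
    obtain ⟨Mg, hMg⟩ := hcomp.exists_forall_nnnorm_le hgc
    exact contDiffHolderOn_zero.2
      ⟨B.continuous₂.comp_continuousOn (hfc.prodMk hgc), _, hCf.bilinear B hCg hMf hMg⟩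
  | succ m ih =>
    have hfm := hf.of_succ hs hconv hcomp hα
    have hgm := hg.of_succ hs hconv hcomp hα
    rw [contDiffHolderOn_succ_iff hs] at hf hg ⊢
    have hderiv : Set.EqOn (fderivWithin ℝ (fun x => B (f x) (g x)) s)
        (fun x => B.precompR E (f x) (fderivWithin ℝ g s x) +
          B.precompL E (fderivWithin ℝ f s x) (g x)) s :=
      fun x hx => B.fderivWithin_of_bilinear (hf.1 x hx) (hg.1 x hx) (hs x hx)
    refine ⟨fun x hx => (B.hasFDerivWithinAt_of_bilinear (hf.1 x hx).hasFDerivWithinAt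
      (hg.1 x hx).hasFDerivWithinAt).differentiableWithinAt, ?_⟩
    exact ((ih _ hfm hg.2).add hs (ih _ hf.2 hgm)).congr hderiv

theorem ContDiffHolderOn.mul (hs : UniqueDiffOn ℝ s) (hconv : Convex ℝ s)
    (hcomp : IsCompact s) (hα : α ≤ 1) {f g : E → ℝ} (hf : ContDiffHolderOn m α f s)
    (hg : ContDiffHolderOn m α g s) : ContDiffHolderOn m α (fun x => f x * g x) s :=
  hf.bilinear hs hconv hcomp hα (ContinuousLinearMap.mul ℝ ℝ) hg

theorem ContDiffHolderOn.inv (hs : UniqueDiffOn ℝ s) (hconv : Convex ℝ s)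
    (hcomp : IsCompact s) (hα : α ≤ 1) {f : E → ℝ} (hf : ContDiffHolderOn m α f s)
    (h0 : ∀ x ∈ s, f x ≠ 0) : ContDiffHolderOn m α (fun x => (f x)⁻¹) s := by
  induction m with
  | zero =>
    obtain ⟨hfc, C, hC⟩ := contDiffHolderOn_zero.1 hf
    obtain ⟨ε, hε, hfε⟩ := hcomp.exists_forall_le' hfc.nnnorm fun x hx => nnnorm_pos.2 (h0 x hx)
    exact contDiffHolderOn_zero.2 ⟨hfc.inv₀ h0, _, hC.inv hε hfε⟩
  | succ m ih =>
    have hinv := ih (hf.of_succ hs hconv hcomp hα)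
    rw [contDiffHolderOn_succ_iff hs] at hf ⊢
    have hderiv : Set.EqOn (fderivWithin ℝ (fun x => (f x)⁻¹) s)
        (fun x => (-ContinuousLinearMap.lsmul ℝ ℝ) ((f x)⁻¹ * (f x)⁻¹) (fderivWithin ℝ f s x))
        s := by
      intro x hx
      refine (((hasFDerivAt_inv (h0 x hx)).comp_hasFDerivWithinAt x
        (hf.1 x hx).hasFDerivWithinAt).fderivWithin (hs x hx)).trans ?_
      ext v
      simp only [ContinuousLinearMap.comp_apply, ContinuousLinearMap.toSpanSingleton_apply,
        smul_eq_mul, neg_apply, ContinuousLinearMap.lsmul_apply, smul_apply]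
      ring
    exact ⟨hf.1.inv h0, ((hinv.mul hs hconv hcomp hα hinv).bilinear hs hconv hcomp hα _
      hf.2).congr hderiv⟩

end ContDiffHolderOn

theorem ContinuousOn.exists_pos_forall_norm_lt_ne_zero {X Y : Type*} [NormedAddCommGroup X]
    [TopologicalSpace Y] [T1Space Y] [Zero Y] {s : Set X} {u : X → Y} (hu : ContinuousOn u s)
    (hs : IsClosed s) (h0 : (0 : X) ∈ s → u 0 ≠ 0) : ∃ δ > 0, ∀ x ∈ s, ‖x‖ < δ → u x ≠ 0 := by
  have hclosed : IsClosed (s ∩ u ⁻¹' {0}) :=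
    hu.preimage_isClosed_of_isClosed hs isClosed_singleton
  obtain ⟨δ, hδ, hball⟩ := Metric.isOpen_iff.1 hclosed.isOpen_compl 0 fun h => h0 h.1 h.2
  exact ⟨δ, hδ, fun x hx hxδ hx0 => hball (mem_ball_zero_iff.2 hxδ) ⟨hx, hx0⟩⟩

theorem mul_self_add_pos {u c : ℝ} (hc : 0 ≤ c) (hu : c = 0 → u ≠ 0) : 0 < u * u + c := by
  rcases hc.eq_or_lt with h | h
  · simpa [← h] using hu h.symm
  · exact add_pos_of_nonneg_of_pos (mul_self_nonneg u) h

section InnerProductSpace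

variable {E : Type} [NormedAddCommGroup E] [InnerProductSpace ℝ E] {m : ℕ} {α : ℝ≥0}
  {s : Set E}

theorem ContDiffBump.contDiff_one_sub_mul_norm {n : ℕ∞} (χ : ContDiffBump (0 : E)) :
    ContDiff ℝ n fun x => (1 - χ x) * ‖x‖ := by
  refine contDiff_iff_contDiffAt.2 fun x => ?_
  rcases eq_or_ne x 0 with rfl | hx
  · refine (contDiffAt_const (c := (0 : ℝ))).congr_of_eventuallyEq ?_
    filter_upwards [χ.eventuallyEq_one] with y hy
    simp [hy]
  · exact (contDiffAt_const.sub χ.contDiffAt).mul (contDiffAt_norm ℝ hx)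

theorem ContDiffBump.eq_one_of_ne_zero {c : E} {χ χ' : ContDiffBump c} (h : χ.rOut ≤ χ'.rIn)
    {x : E} (hx : χ x ≠ 0) : χ' x = 1 :=
  χ'.one_of_mem_closedBall <|
    Metric.closedBall_subset_closedBall h (Metric.ball_subset_closedBall (χ.support_eq ▸ hx))

theorem ContDiffHolderOn.exists_eq_inv_of_eq_zero (hs : UniqueDiffOn ℝ s) (hconv : Convex ℝ s)
    (hcomp : IsCompact s) (hα : α ≤ 1) {u c : E → ℝ} (hu : ContDiffHolderOn m α u s)
    (hc : ContDiffHolderOn m α c s) (hc0 : ∀ x ∈ s, 0 ≤ c x)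
    (hne : ∀ x ∈ s, c x = 0 → u x ≠ 0) :
    ∃ v : E → ℝ, ContDiffHolderOn m α v s ∧ ∀ x ∈ s, c x = 0 → v x = (u x)⁻¹ := by
  refine ⟨fun x => u x * (u x * u x + c x)⁻¹, hu.mul hs hconv hcomp hα ?_, fun x hx h => ?_⟩
  · exact ((hu.mul hs hconv hcomp hα hu).add hs hc).inv hs hconv hcomp hα
      fun x hx => (mul_self_add_pos (hc0 x hx) (hne x hx)).ne'
  · simp only [h, add_zero]
    field_simp [hne x hx h]

theorem exists_inv_eq_add_norm_mul (hs : UniqueDiffOn ℝ s) (hconv : Convex ℝ s)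
    (hcomp : IsCompact s) (hα : α ≤ 1) {f₁ f₂ : E → ℝ}
    (h₁ : ContDiffHolderOn m α f₁ s) (h₂ : ContDiffHolderOn m α f₂ s)
    (hne : ∀ x ∈ s, f₁ x + ‖x‖ * f₂ x ≠ 0) :
    ∃ g₁ g₂ : E → ℝ, ContDiffHolderOn m α g₁ s ∧ ContDiffHolderOn m α g₂ s ∧
      ∀ x ∈ s, (f₁ x + ‖x‖ * f₂ x)⁻¹ = g₁ x + ‖x‖ * g₂ x := by
  have smooth {u : E → ℝ} (hu : ContDiff ℝ ∞ u) : ContDiffHolderOn m α u s :=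
    (hu.of_le (by exact_mod_cast le_top)).contDiffOn.contDiffHolderOn hs hconv hcomp hα
  have add {u v : E → ℝ} (hu : ContDiffHolderOn m α u s) (hv : ContDiffHolderOn m α v s) :=
    hu.add hs hv
  have mul {u v : E → ℝ} (hu : ContDiffHolderOn m α u s) (hv : ContDiffHolderOn m α v s) :=
    hu.mul hs hconv hcomp hα hv
  obtain ⟨δ, hδ, hconj⟩ := ContinuousOn.exists_pos_forall_norm_lt_ne_zero
    (u := fun x => f₁ x - ‖x‖ * f₂ x)
    (h₁.1.continuousOn.sub (continuous_norm.continuousOn.mul h₂.1.continuousOn))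
    hcomp.isClosed fun h0 => by simpa using hne 0 h0
  set χ₀ : ContDiffBump (0 : E) := ⟨δ / 8, δ / 4, by positivity, by linarith⟩
  set χ : ContDiffBump (0 : E) := ⟨δ / 4, δ / 2, by positivity, by linarith⟩
  set χ₁ : ContDiffBump (0 : E) := ⟨δ / 2, δ, by positivity, by linarith⟩
  have hχ₁δ {x : E} (hx : χ₁ x ≠ 0) : ‖x‖ < δ := mem_ball_zero_iff.1 (χ₁.support_eq ▸ hx)
  obtain ⟨u, hu, hu_eq⟩ := ContDiffHolderOn.exists_eq_inv_of_eq_zero hs hconv hcomp hα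
    (add h₁ (mul (smooth χ₀.contDiff_one_sub_mul_norm) h₂)) (smooth χ₀.contDiff)
    (fun x _ => χ₀.nonneg) fun x hx h => by simpa [h] using hne x hx
  have hfactor (x : E) : f₁ x * f₁ x + -‖x‖ ^ 2 * (f₂ x * f₂ x) =
      (f₁ x + ‖x‖ * f₂ x) * (f₁ x - ‖x‖ * f₂ x) := by ring
  obtain ⟨v, hv, hv_eq⟩ := ContDiffHolderOn.exists_eq_inv_of_eq_zero hs hconv hcomp hα
    (add (mul h₁ h₁) (mul (smooth (contDiff_norm_sq ℝ).neg) (mul h₂ h₂)))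
    (smooth (contDiff_const.sub χ₁.contDiff)) (fun x _ => sub_nonneg.2 χ₁.le_one)
    fun x hx h => by
      rw [hfactor]
      exact mul_ne_zero (hne x hx) (hconj x hx (hχ₁δ (by linarith)))
  refine ⟨fun x => (1 - χ x) * u x + χ x * f₁ x * v x, fun x => -χ x * f₂ x * v x,
    add (mul (smooth (contDiff_const.sub χ.contDiff)) hu) (mul (mul (smooth χ.contDiff) h₁) hv),
    mul (mul (smooth χ.contDiff.neg) h₂) hv, fun x hx => ?_⟩
  have hfar : (1 - χ x) * u x = (1 - χ x) * (f₁ x + ‖x‖ * f₂ x)⁻¹ := by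
    by_cases h : χ₀ x = 0
    · simp [hu_eq x hx h, h]
    · simp [ContDiffBump.eq_one_of_ne_zero (χ' := χ) le_rfl h]
  have hnear : χ x * (f₁ x - ‖x‖ * f₂ x) * v x = χ x * (f₁ x + ‖x‖ * f₂ x)⁻¹ := by
    by_cases h : χ x = 0
    · simp [h]
    · have hχ₁ : χ₁ x = 1 := ContDiffBump.eq_one_of_ne_zero le_rfl h
      have hconj_x := hconj x hx (hχ₁δ (by simp [hχ₁]))
      rw [hv_eq x hx (by simp [hχ₁]), hfactor]
      field_simp [hne x hx, hconj_x]
  linear_combination -hfar - hnear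

end InnerProductSpace

theorem stmt3_general (m : ℕ) (α : ℝ≥0) (hα1 : (α : ℝ) < 1)
    (a : ℝ) (ha : 0 < a) (f : E3 → ℝ)
    (hf : Em m α a f) (hne : ∀ x ∈ closedBall (0 : E3) a, f x ≠ 0) :
    Em m α a (fun x => (f x)⁻¹) := by
  obtain ⟨f₁, f₂, h₁, h₂, hf⟩ := hf
  have hs : UniqueDiffOn ℝ (closedBall (0 : E3) a) :=
    uniqueDiffOn_convex (convex_closedBall 0 a) (by simpa [interior_closedBall _ ha.ne'] using ha)
  obtain ⟨g₁, g₂, hg₁, hg₂, hg⟩ := exists_inv_eq_add_norm_mul hs (convex_closedBall 0 a)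
    (isCompact_closedBall 0 a) (by exact_mod_cast hα1.le) h₁ h₂ fun x hx => hf x hx ▸ hne x hx
  exact ⟨g₁, g₂, hg₁, hg₂, fun x hx => by simpa only [hf x hx] using hg x hx⟩

/-- If f ∈ E^{m,α}(B_a) and f(x) ≠ 0 for all x ∈ B̄_a, then 1/f ∈ E^{m,α}(B_a). -/
theorem stmt3 (m : ℕ) (α : ℝ≥0) (hα : 0 < α) (hα1 : (α : ℝ) < 1)
    (a : ℝ) (ha : 0 < a) (f : E3 → ℝ)
    (hf : Em m α a f) (hne : ∀ x ∈ closedBall (0 : E3) a, f x ≠ 0) :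
    Em m α a (fun x => (f x)⁻¹) :=
  stmt3_general m α hα1 a ha f hf hne

end
end

section
/- For every polynomial T_m of degree m on ℝ³ there exists a polynomial p_m of degree m such that Δ(r³ p_m) = r T_m, where r(x)=|x|. -/
open Metric Real

noncomputable section

/-- The flat Laplacian on ℝ³. -/
noncomputable def lap (f : E3 → ℝ) (x : E3) : ℝ :=
  ∑ i : Fin 3, fderiv ℝ (fun y => fderiv ℝ f y (EuclideanSpace.single i 1)) x
    (EuclideanSpace.single i 1)

/-- Evaluation of a polynomial in three variables at a point of ℝ³. -/
noncomputable def evalP (p : MvPolynomial (Fin 3) ℝ) (x : E3) : ℝ :=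
  MvPolynomial.eval (fun i => x i) p

/-!
Since `Δ(r³) = 12 r` and `∇(r³) = 3 r x`, one has `Δ(r³ p) = r (12 p + 6 x·∇p + r² Δp)` for every
polynomial `p`, and the bracket is a linear operator `L` on polynomials that does not raise the
total degree. `L` is injective: for the Fischer inner product `⟨p, q⟩ = ∑ₛ s! pₛ qₛ`, multiplication
by `xᵢ` is adjoint to `∂ᵢ`, so `⟨L p, p⟩ = 12 ⟨p, p⟩ + 6 ∑ᵢ ⟨∂ᵢp, ∂ᵢp⟩ + ⟨Δp, Δp⟩ > 0` for `p ≠ 0`.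
Hence `L` is onto the finite-dimensional space of polynomials of degree `≤ m`. At the origin, where
`r` is not differentiable, the first partials `r Gᵢ` have `Gᵢ(0) = 0`, hence derivative `0`.
-/

open MvPolynomial Asymptotics Topology

namespace MvPolynomial

variable {σ : Type*}

def factorialWeight (s : σ →₀ ℕ) : ℝ := s.prod fun _ n => (n.factorial : ℝ)

lemma factorialWeight_pos (s : σ →₀ ℕ) : 0 < factorialWeight s :=
  Finset.prod_pos fun _ _ => Nat.cast_pos.mpr (Nat.factorial_pos _)

open Finsupp in
lemma factorialWeight_add_single (t : σ →₀ ℕ) (i : σ) :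
    factorialWeight (t + single i 1) = (t i + 1) * factorialWeight t := by
  classical
  have h1 : ∀ _ : σ, ((0 : ℕ).factorial : ℝ) = 1 := fun _ => by simp
  unfold factorialWeight
  rw [← mul_prod_erase' (t + single i 1) i _ h1, ← mul_prod_erase' t i _ h1, erase_add,
    erase_single, add_zero, Finsupp.add_apply, single_eq_same, Nat.factorial_succ]
  push_cast
  ring

def fischerSum (p q : MvPolynomial σ ℝ) : ℝ :=
  ∑ s ∈ p.support, coeff s p * coeff s q * factorialWeight s

lemma fischerSum_eq_of_support_subset {p q : MvPolynomial σ ℝ} {S : Finset (σ →₀ ℕ)}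
    (h : p.support ⊆ S) :
    fischerSum p q = ∑ s ∈ S, coeff s p * coeff s q * factorialWeight s :=
  Finset.sum_subset h fun s _ hs => by rw [notMem_support_iff.mp hs, zero_mul, zero_mul]

def fischer : LinearMap.BilinForm ℝ (MvPolynomial σ ℝ) :=
  LinearMap.mk₂ ℝ fischerSum
    (fun p₁ p₂ q => by
      classical
      rw [fischerSum_eq_of_support_subset support_add,
        fischerSum_eq_of_support_subset Finset.subset_union_left,
        fischerSum_eq_of_support_subset Finset.subset_union_right, ← Finset.sum_add_distrib]
      simp only [coeff_add, add_mul])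
    (fun c p q => by
      rw [fischerSum_eq_of_support_subset support_smul, fischerSum, Finset.smul_sum]
      simp only [coeff_smul, smul_eq_mul, mul_assoc])
    (fun p q₁ q₂ => by
      simp only [fischerSum, coeff_add, mul_add, add_mul, Finset.sum_add_distrib])
    (fun c p q => by
      simp only [fischerSum, coeff_smul, smul_eq_mul, Finset.mul_sum]
      exact Finset.sum_congr rfl fun _ _ => by ring)

lemma fischer_apply (p q : MvPolynomial σ ℝ) :
    fischer p q = ∑ s ∈ p.support, coeff s p * coeff s q * factorialWeight s := rfl

lemma fischer_X_mul (i : σ) (p q : MvPolynomial σ ℝ) :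
    fischer (X i * p) q = fischer p (pderiv i q) := by
  rw [fischer_apply, fischer_apply, mul_comm, support_mul_X, Finset.sum_map]
  refine Finset.sum_congr rfl fun s _ => ?_
  simp only [addRightEmbedding_apply, coeff_mul_X, coeff_pderiv, factorialWeight_add_single]
  ring

lemma fischer_self_nonneg (p : MvPolynomial σ ℝ) : 0 ≤ fischer p p :=
  Finset.sum_nonneg fun s _ => mul_nonneg (mul_self_nonneg _) (factorialWeight_pos s).le

lemma fischer_self_pos {p : MvPolynomial σ ℝ} (hp : p ≠ 0) : 0 < fischer p p := by
  obtain ⟨s, hs⟩ := support_nonempty.mpr hp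
  refine Finset.sum_pos' (fun t _ => ?_) ⟨s, hs, ?_⟩
  · exact mul_nonneg (mul_self_nonneg _) (factorialWeight_pos t).le
  · exact mul_pos (mul_self_pos.mpr (mem_support_iff.mp hs)) (factorialWeight_pos s)

lemma totalDegree_pderiv_lt {R : Type*} [CommSemiring R] {p : MvPolynomial σ R} {i : σ}
    (h : pderiv i p ≠ 0) : (pderiv i p).totalDegree < p.totalDegree := by
  obtain ⟨t, ht, hdeg⟩ :=
    Finset.exists_mem_eq_sup _ (support_nonempty.mpr h) fun s => s.sum fun _ e => e
  have ht' : t + Finsupp.single i 1 ∈ p.support := by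
    rw [mem_support_iff, coeff_pderiv] at ht
    exact mem_support_iff.mpr (left_ne_zero_of_mul ht)
  calc (pderiv i p).totalDegree = t.degree := hdeg
    _ < (t + Finsupp.single i 1).degree := by simp
    _ ≤ p.totalDegree := le_totalDegree ht'

lemma totalDegree_X_mul_pderiv_le {R : Type*} [CommSemiring R] [Nontrivial R]
    (p : MvPolynomial σ R) (i j : σ) : (X j * pderiv i p).totalDegree ≤ p.totalDegree := by
  rcases eq_or_ne (pderiv i p) 0 with h | h
  · simp [h]
  have := totalDegree_pderiv_lt h
  calc (X j * pderiv i p).totalDegree ≤ (X j).totalDegree + (pderiv i p).totalDegree :=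
        totalDegree_mul _ _
    _ ≤ p.totalDegree := by rw [totalDegree_X]; omega

lemma totalDegree_X_sq_mul_pderiv_pderiv_le {R : Type*} [CommSemiring R] [Nontrivial R]
    (p : MvPolynomial σ R) (i j : σ) :
    (X j ^ 2 * pderiv i (pderiv i p)).totalDegree ≤ p.totalDegree := by
  rcases eq_or_ne (pderiv i (pderiv i p)) 0 with h | h
  · simp [h]
  have h₁ := totalDegree_pderiv_lt h
  have h₂ := totalDegree_pderiv_lt fun h' : pderiv i p = 0 => h (by rw [h', map_zero])
  calc (X j ^ 2 * pderiv i (pderiv i p)).totalDegree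
      ≤ (X j ^ 2).totalDegree + (pderiv i (pderiv i p)).totalDegree := totalDegree_mul _ _
    _ ≤ p.totalDegree := by rw [totalDegree_X_pow]; omega

variable [Fintype σ]

lemma pderiv_sum_X_sq {R : Type*} [CommSemiring R] (i : σ) :
    pderiv i (∑ j, X j ^ 2 : MvPolynomial σ R) = 2 * X i := by
  classical
  simp [pderiv_X, Pi.single_apply]

def laplacian (p : MvPolynomial σ ℝ) : MvPolynomial σ ℝ := ∑ i, pderiv i (pderiv i p)

/-- The operator `p ↦ r⁻¹ Δ(r³ p)` on polynomials, where `r² = ∑ⱼ Xⱼ²`. -/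
def normCubeLaplacian : MvPolynomial σ ℝ →ₗ[ℝ] MvPolynomial σ ℝ where
  toFun p := (12 : ℝ) • p + (6 : ℝ) • ∑ i, X i * pderiv i p + (∑ j, X j ^ 2) * laplacian p
  map_add' p q := by
    simp only [laplacian, map_add, smul_add, mul_add, Finset.sum_add_distrib]
    ring
  map_smul' c p := by
    simp only [laplacian, Derivation.map_smul, smul_add, mul_smul_comm, ← Finset.smul_sum,
      RingHom.id_apply]
    rw [smul_comm c (12 : ℝ), smul_comm c (6 : ℝ)]

lemma normCubeLaplacian_apply (p : MvPolynomial σ ℝ) :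
    normCubeLaplacian p =
      (12 : ℝ) • p + (6 : ℝ) • ∑ i, X i * pderiv i p + (∑ j, X j ^ 2) * laplacian p := rfl

lemma fischer_normCubeLaplacian_self (p : MvPolynomial σ ℝ) :
    fischer (normCubeLaplacian p) p =
      12 * fischer p p + 6 * ∑ i, fischer (pderiv i p) (pderiv i p)
        + fischer (laplacian p) (laplacian p) := by
  have hX2 : ∀ j, X j ^ 2 * laplacian p = X j * (X j * laplacian p) := fun j => by ring
  simp only [normCubeLaplacian_apply, map_add, map_smul, map_sum, LinearMap.add_apply,
    LinearMap.smul_apply, LinearMap.sum_apply, Finset.sum_mul, hX2,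
    fischer_X_mul, smul_eq_mul]
  rw [← map_sum]
  rfl

lemma normCubeLaplacian_injective : Function.Injective (normCubeLaplacian (σ := σ)) := by
  refine (injective_iff_map_eq_zero _).mpr fun p hp => ?_
  by_contra hne
  have key := fischer_normCubeLaplacian_self p
  rw [hp, map_zero, LinearMap.zero_apply] at key
  have hp₀ := fischer_self_pos hne
  have hlap := fischer_self_nonneg (laplacian p)
  have hgrad := Finset.sum_nonneg fun i (_ : i ∈ Finset.univ) => fischer_self_nonneg (pderiv i p)
  linarith

lemma normCubeLaplacian_mem_restrictTotalDegree {m : ℕ} {p : MvPolynomial σ ℝ}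
    (hp : p ∈ restrictTotalDegree σ ℝ m) :
    normCubeLaplacian p ∈ restrictTotalDegree σ ℝ m := by
  rw [mem_restrictTotalDegree] at hp
  have hmem : ∀ q : MvPolynomial σ ℝ, q.totalDegree ≤ p.totalDegree →
      q ∈ restrictTotalDegree σ ℝ m := fun q hq => (mem_restrictTotalDegree σ m q).mpr (hq.trans hp)
  rw [normCubeLaplacian_apply, laplacian, Finset.sum_mul]
  simp only [Finset.mul_sum]
  refine add_mem (add_mem (Submodule.smul_mem _ _ (hmem _ le_rfl))
    (Submodule.smul_mem _ _ (Submodule.sum_mem _ fun i _ => hmem _ ?_)))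
    (Submodule.sum_mem _ fun j _ => Submodule.sum_mem _ fun i _ => hmem _ ?_)
  · exact totalDegree_X_mul_pderiv_le p i i
  · exact totalDegree_X_sq_mul_pderiv_pderiv_le p i j

lemma exists_normCubeLaplacian_eq {m : ℕ} {T : MvPolynomial σ ℝ} (hT : T.totalDegree ≤ m) :
    ∃ p : MvPolynomial σ ℝ, p.totalDegree ≤ m ∧ normCubeLaplacian p = T := by
  let L := (normCubeLaplacian (σ := σ)).restrict fun _ =>
    normCubeLaplacian_mem_restrictTotalDegree (m := m)
  have hL : Function.Surjective L := LinearMap.injective_iff_surjective.mp fun p q hpq =>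
    Subtype.ext (normCubeLaplacian_injective (congrArg Subtype.val hpq))
  obtain ⟨⟨p, hp⟩, hpT⟩ := hL ⟨T, (mem_restrictTotalDegree σ m T).mpr hT⟩
  exact ⟨p, (mem_restrictTotalDegree σ m p).mp hp, congrArg Subtype.val hpT⟩

end MvPolynomial

section PartialDeriv

variable {ι : Type*} [Fintype ι] [DecidableEq ι]

def partialDeriv (i : ι) (f : EuclideanSpace ℝ ι → ℝ) (x : EuclideanSpace ℝ ι) : ℝ :=
  fderiv ℝ f x (EuclideanSpace.single i 1)

lemma partialDeriv_mul {f g : EuclideanSpace ℝ ι → ℝ} {x : EuclideanSpace ℝ ι}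
    (hf : DifferentiableAt ℝ f x) (hg : DifferentiableAt ℝ g x) (i : ι) :
    partialDeriv i (fun y => f y * g y) x =
      f x * partialDeriv i g x + g x * partialDeriv i f x := by
  simp only [partialDeriv, fderiv_fun_mul hf hg, add_apply, smul_apply, smul_eq_mul]

lemma partialDeriv_apply_coord (i j : ι) (x : EuclideanSpace ℝ ι) :
    partialDeriv i (fun y => y j) x = Pi.single (M := fun _ => ℝ) i 1 j := by
  have h : (fun y : EuclideanSpace ℝ ι => y j) = EuclideanSpace.proj j := rfl
  rw [partialDeriv, h, ContinuousLinearMap.fderiv]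
  simp [Pi.single_apply]

lemma hasFDerivAt_norm {E : Type*} [NormedAddCommGroup E] [InnerProductSpace ℝ E] {x : E}
    (hx : x ≠ 0) : HasFDerivAt (‖·‖) (‖x‖⁻¹ • innerSL ℝ x) x := by
  have h := (hasStrictFDerivAt_norm_sq x).hasFDerivAt.sqrt (by positivity)
  simp only [Real.sqrt_sq (norm_nonneg _)] at h
  convert h using 1
  ext v
  simp
  field_simp

lemma hasFDerivAt_norm_mul_at_zero {E : Type*} [NormedAddCommGroup E] [NormedSpace ℝ E]
    {g : E → ℝ} (hg : ContinuousAt g 0) (h0 : g 0 = 0) :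
    HasFDerivAt (fun y => ‖y‖ * g y) (0 : E →L[ℝ] ℝ) 0 := by
  refine .of_isLittleO ?_
  calc (fun y => ‖y‖ * g y - ‖(0 : E)‖ * g 0 - (0 : E →L[ℝ] ℝ) (y - 0))
      = fun y => ‖y‖ * g y := by funext y; simp
    _ =o[𝓝 0] fun y => ‖y‖ * 1 :=
      (isBigO_refl _ _).mul_isLittleO <| (isLittleO_const_iff one_ne_zero).mpr (h0 ▸ hg.tendsto)
    _ =O[𝓝 0] fun y => y - 0 := by
      simp_rw [mul_one, isBigO_norm_left (f' := fun y => y), sub_zero, isBigO_refl]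

lemma partialDeriv_norm {x : EuclideanSpace ℝ ι} (hx : x ≠ 0) (i : ι) :
    partialDeriv i (‖·‖) x = x i / ‖x‖ := by
  simp [partialDeriv, (hasFDerivAt_norm hx).fderiv, EuclideanSpace.inner_single_right,
    div_eq_inv_mul]

lemma partialDeriv_norm_mul {g : EuclideanSpace ℝ ι → ℝ} (hg : Differentiable ℝ g) (h0 : g 0 = 0)
    (i : ι) (x : EuclideanSpace ℝ ι) :
    partialDeriv i (fun y => ‖y‖ * g y) x = x i / ‖x‖ * g x + ‖x‖ * partialDeriv i g x := by
  rcases eq_or_ne x 0 with rfl | hx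
  -- at the origin both sides vanish, `x i / ‖x‖` being `0 / 0 = 0`
  · rw [partialDeriv, (hasFDerivAt_norm_mul_at_zero hg.continuous.continuousAt h0).fderiv]
    simp [h0]
  · rw [partialDeriv_mul (hasFDerivAt_norm hx).differentiableAt (hg x), partialDeriv_norm hx]
    ring

end PartialDeriv

lemma lap_eq_sum_partialDeriv (f : E3 → ℝ) (x : E3) :
    lap f x = ∑ i, partialDeriv i (partialDeriv i f) x := rfl

lemma differentiable_evalP (p : MvPolynomial (Fin 3) ℝ) : Differentiable ℝ (evalP p) :=
  fun x => (AnalyticOnNhd.eval_continuousLinearMap' (𝕜 := ℝ)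
    (fun i : Fin 3 => EuclideanSpace.proj (𝕜 := ℝ) i) p x trivial).differentiableAt

lemma partialDeriv_evalP (p : MvPolynomial (Fin 3) ℝ) (i : Fin 3) (x : E3) :
    partialDeriv i (evalP p) x = evalP (pderiv i p) x := by
  induction p using MvPolynomial.induction_on with
  | C a =>
    have h : evalP (C a) = fun _ => a := funext fun _ => eval_C a
    simp [partialDeriv, h, evalP]
  | add p q hp hq =>
    have h : evalP (p + q) = evalP p + evalP q := funext fun _ => eval_add
    rw [partialDeriv, h, fderiv_add (differentiable_evalP p x) (differentiable_evalP q x)]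
    simp_all [partialDeriv, evalP]
  | mul_X p j hp =>
    have h : evalP (p * X j) = fun y => evalP p y * y j := funext fun _ => by simp [evalP]
    have hXj : DifferentiableAt ℝ (fun y : E3 => y j) x := by fun_prop
    rw [h, partialDeriv_mul (differentiable_evalP p x) hXj i, hp, partialDeriv_apply_coord]
    rcases eq_or_ne i j with rfl | hij <;> simp [evalP, pderiv_X, *]

lemma partialDeriv_norm_cube_mul_evalP (p : MvPolynomial (Fin 3) ℝ) (i : Fin 3) :
    partialDeriv i (fun y => ‖y‖ ^ 3 * evalP p y) =
      fun y => ‖y‖ * evalP ((3 : ℝ) • (X i * p) + (∑ j, X j ^ 2) * pderiv i p) y := by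
  funext y
  have hsq : ∀ z : E3, ∑ j, z j ^ 2 = ‖z‖ ^ 2 := fun z => (EuclideanSpace.real_norm_sq_eq z).symm
  have hf : (fun y => ‖y‖ ^ 3 * evalP p y) = fun y => ‖y‖ * evalP ((∑ j, X j ^ 2) * p) y := by
    funext z
    simp only [evalP, map_mul, map_sum, map_pow, eval_X, hsq]
    ring
  have h0 : evalP ((∑ j, X j ^ 2) * p) 0 = 0 := by simp [evalP]
  rw [hf, partialDeriv_norm_mul (differentiable_evalP _) h0, partialDeriv_evalP,
    Derivation.leibniz, pderiv_sum_X_sq]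
  simp only [evalP, map_add, map_mul, map_sum, map_pow, map_ofNat, smul_eval, eval_X, smul_eq_mul,
    hsq]
  rcases eq_or_ne ‖y‖ 0 with hy | hy
  · simp [hy]
  · field_simp
    ring

lemma lap_norm_cube_mul_evalP (p : MvPolynomial (Fin 3) ℝ) (x : E3) :
    lap (fun y => ‖y‖ ^ 3 * evalP p y) x = ‖x‖ * evalP (normCubeLaplacian p) x := by
  have hG0 : ∀ i, evalP ((3 : ℝ) • (X i * p) + (∑ j, X j ^ 2) * pderiv i p) 0 = 0 := fun i => by
    simp [evalP]
  rw [lap_eq_sum_partialDeriv]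
  simp_rw [partialDeriv_norm_cube_mul_evalP,
    partialDeriv_norm_mul (differentiable_evalP _) (hG0 _), partialDeriv_evalP]
  simp only [normCubeLaplacian_apply, laplacian, map_add, Derivation.leibniz, Derivation.map_smul,
    pderiv_sum_X_sq, pderiv_X_self]
  simp only [evalP, map_add, map_mul, map_sum, map_pow, map_ofNat, map_one, eval_X, smul_eq_mul,
    smul_eval]
  have hsq := EuclideanSpace.real_norm_sq_eq x
  simp only [Fin.sum_univ_three] at hsq ⊢
  rw [← hsq]
  rcases eq_or_ne ‖x‖ 0 with hx | hx
  · simp [norm_eq_zero.mp hx]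
  · field_simp
    linear_combination (-3 * eval (fun i => x i) p) * hsq

/-- For every polynomial T_m of degree m on ℝ³ there is a polynomial p_m of degree m
such that Δ(r³ p_m) = r T_m, where r(x) = |x|. -/
theorem stmt5 (m : ℕ) (T : MvPolynomial (Fin 3) ℝ) (hT : T.totalDegree ≤ m) :
    ∃ p : MvPolynomial (Fin 3) ℝ, p.totalDegree ≤ m ∧
      ∀ x : E3, lap (fun y => ‖y‖ ^ 3 * evalP p y) x = ‖x‖ * evalP T x := by
  obtain ⟨p, hp, hpT⟩ := exists_normCubeLaplacian_eq hT
  exact ⟨p, hp, fun x => by rw [lap_norm_cube_mul_evalP, hpT]⟩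

end
end

section
/- On ℝ³ \ {0}, define Ψ_Q^{ab} = (3/(2r²))(Q^a n^b + Q^b n^a − (δ^{ab} − n^a n^b) Q^c n_c) with n^a = x^a/r and Q^a a constant vector. Then Ψ_Q^{ab} is symmetric, trace-free, and satisfies ∂_a Ψ_Q^{ab} = 0 on ℝ³ \ {0}. -/
open Metric Real

noncomputable section

/-- The radial unit normal n^a = x^a/r. -/
noncomputable def nv (x : E3) (i : Fin 3) : ℝ := x i / ‖x‖

/-- The flat metric (Kronecker delta). -/
def kd (i j : Fin 3) : ℝ := if i = j then 1 else 0

/-- Ψ_Q^{ab} = (3/(2r²))(Q^a n^b + Q^b n^a − (δ^{ab} − n^a n^b) Q^c n_c). -/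
noncomputable def PsiQ (Q : Fin 3 → ℝ) (x : E3) (i j : Fin 3) : ℝ :=
  3 / (2 * ‖x‖ ^ 2) *
    (Q i * nv x j + Q j * nv x i - (kd i j - nv x i * nv x j) * ∑ c, Q c * nv x c)

/-!
Away from the origin `Ψ_Q^{ab} = (3/2) ((Q^a x^b + Q^b x^a − δ^{ab} Q·x) r⁻³ + x^a x^b (Q·x) r⁻⁵)`.
Trace-freeness is `2 Q·n − (3 − n·n) Q·n = 0`. Differentiating with `∂_a x^b = δ_a^b` and
`∂_a r⁻ᵏ = −k x_a r⁻ᵏ⁻²`, the divergence sums to `(3/2) (3 Q^b r⁻³ + 5 x^b (Q·x) r⁻⁵) (1 − r² r⁻²) = 0`;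
the dimension enters through `δ^a_a = 3`.
-/

section InverseNorm

variable {F : Type*} [NormedAddCommGroup F] [InnerProductSpace ℝ F] {x : F}

theorem hasFDerivAt_norm_of_ne_zero (hx : x ≠ 0) :
    HasFDerivAt (‖·‖) (‖x‖⁻¹ • innerSL ℝ x) x := by
  have h := (Real.hasDerivAt_sqrt (by positivity : ‖x‖ ^ 2 ≠ 0)).comp_hasFDerivAt x
    (hasStrictFDerivAt_norm_sq x).hasFDerivAt
  simp only [Function.comp_def, Real.sqrt_sq (norm_nonneg _)] at h
  refine h.congr_fderiv ?_
  match_scalars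
  field_simp

theorem hasFDerivAt_inv_norm_pow (hx : x ≠ 0) (k : ℕ) :
    HasFDerivAt (fun y => ‖y‖⁻¹ ^ k) (-(k * ‖x‖⁻¹ ^ (k + 2)) • innerSL ℝ x) x := by
  have hr : ‖x‖ ≠ 0 := norm_ne_zero_iff.mpr hx
  refine (((hasDerivAt_inv hr).comp_hasFDerivAt x
    (hasFDerivAt_norm_of_ne_zero hx)).pow k).congr_fderiv ?_
  match_scalars
  rcases k with _ | k
  · simp
  · simp only [Function.comp_apply, Nat.add_sub_cancel, pow_succ]
    push_cast
    field_simp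
    ring

end InverseNorm

theorem kd_comm (i j : Fin 3) : kd i j = kd j i := by
  simp only [kd, eq_comm]

theorem sum_nv_sq {x : E3} (hx : x ≠ 0) : ∑ i, nv x i ^ 2 = 1 := by
  have hr : ‖x‖ ≠ 0 := norm_ne_zero_iff.mpr hx
  simp only [nv, div_pow, ← Finset.sum_div]
  rw [div_eq_one_iff_eq (pow_ne_zero 2 hr), EuclideanSpace.norm_sq_eq]
  simp only [norm_eq_abs, sq_abs]

section Quadrupole

variable (Q : Fin 3 → ℝ)

theorem psiQ_comm (x : E3) (i j : Fin 3) : PsiQ Q x i j = PsiQ Q x j i := by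
  simp only [PsiQ, kd_comm i j]
  ring

theorem sum_psiQ_diag {x : E3} (hx : x ≠ 0) : ∑ i, PsiQ Q x i i = 0 := by
  have h := sum_nv_sq hx
  simp only [PsiQ, kd, if_true, ← Finset.mul_sum, Finset.sum_sub_distrib, Finset.sum_add_distrib,
    ← Finset.sum_mul, sub_mul, one_mul, Finset.sum_const, Finset.card_univ, Fintype.card_fin]
  simp only [← pow_two, h]
  ring

theorem psiQ_eq_of_ne_zero {y : E3} (hy : y ≠ 0) (i j : Fin 3) :
    PsiQ Q y i j = 3 / 2 * ((Q i * y j + Q j * y i - kd i j * ∑ c, Q c * y c) * ‖y‖⁻¹ ^ 3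
      + y i * y j * (∑ c, Q c * y c) * ‖y‖⁻¹ ^ 5) := by
  have hr : ‖y‖ ≠ 0 := norm_ne_zero_iff.mpr hy
  simp only [PsiQ, nv, ← Finset.sum_div, mul_div_assoc']
  field_simp
  ring

theorem fderiv_psiQ_apply {x : E3} (hx : x ≠ 0) (i j : Fin 3) (v : E3) :
    fderiv ℝ (fun y => PsiQ Q y i j) x v = 3 / 2 *
      ((Q i * v j + Q j * v i - kd i j * ∑ c, Q c * v c) * ‖x‖⁻¹ ^ 3
        - 3 * (Q i * x j + Q j * x i - kd i j * ∑ c, Q c * x c) * inner ℝ x v * ‖x‖⁻¹ ^ 5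
        + (v i * x j * ∑ c, Q c * x c + x i * v j * ∑ c, Q c * x c
            + x i * x j * ∑ c, Q c * v c) * ‖x‖⁻¹ ^ 5
        - 5 * x i * x j * (∑ c, Q c * x c) * inner ℝ x v * ‖x‖⁻¹ ^ 7) := by
  have hcoord (k : Fin 3) := PiLp.hasFDerivAt_apply (𝕜 := ℝ) 2 x k
  have hS := HasFDerivAt.fun_sum (u := Finset.univ) fun c _ => (hcoord c).const_mul (Q c)
  have hF := (((((hcoord j).const_mul (Q i)).fun_add ((hcoord i).const_mul (Q j))).fun_sub
      (hS.const_mul (kd i j))).fun_mul (hasFDerivAt_inv_norm_pow hx 3)).fun_add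
      ((((hcoord i).fun_mul (hcoord j)).fun_mul hS).fun_mul
        (hasFDerivAt_inv_norm_pow hx 5)) |>.const_mul (3 / 2 : ℝ)
  have hPsi : HasFDerivAt (fun y => PsiQ Q y i j) _ x := hF.congr_of_eventuallyEq <| by
    filter_upwards [isOpen_ne.mem_nhds hx] with y hy
    exact psiQ_eq_of_ne_zero Q hy i j
  rw [hPsi.fderiv]
  simp only [Nat.cast_ofNat, Nat.reduceAdd, inv_pow, neg_smul, smul_neg, smul_add, add_apply,
    neg_apply, smul_apply, sub_apply, sum_apply, coe_innerSL_apply, smul_eq_mul, PiLp.proj_apply]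
  ring

theorem sum_fderiv_psiQ_single {x : E3} (hx : x ≠ 0) (j : Fin 3) :
    ∑ i, fderiv ℝ (fun y => PsiQ Q y i j) x (EuclideanSpace.single i 1) = 0 := by
  have hr : ‖x‖ ≠ 0 := norm_ne_zero_iff.mpr hx
  have hdiv : ∑ i, fderiv ℝ (fun y => PsiQ Q y i j) x (EuclideanSpace.single i 1) =
      3 / 2 * (3 * Q j * ‖x‖⁻¹ ^ 3 + 5 * x j * (∑ c, Q c * x c) * ‖x‖⁻¹ ^ 5) *
        (1 - ‖x‖ ^ 2 * ‖x‖⁻¹ ^ 2) := by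
    simp only [fderiv_psiQ_apply Q hx, PiLp.single_apply,
      EuclideanSpace.inner_single_right, EuclideanSpace.norm_sq_eq, Fin.sum_univ_three]
    fin_cases j <;>
      simp only [kd, Fin.zero_eta, Fin.mk_one, Fin.reduceFinMk, Fin.reduceEq, ↓reduceIte,
        conj_trivial, norm_eq_abs, sq_abs] <;>
      ring
  rw [hdiv, ← mul_pow, mul_inv_cancel₀ hr]
  ring

end Quadrupole

/-- Ψ_Q^{ab} is symmetric, trace-free and divergence-free on ℝ³ \ {0}. -/
theorem stmt12 (Q : Fin 3 → ℝ) :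
    (∀ x : E3, ∀ i j, PsiQ Q x i j = PsiQ Q x j i) ∧
    (∀ x : E3, x ≠ 0 → ∑ i, PsiQ Q x i i = 0) ∧
    (∀ x : E3, x ≠ 0 → ∀ j : Fin 3,
      ∑ i, fderiv ℝ (fun y => PsiQ Q y i j) x (EuclideanSpace.single i 1) = 0) :=
  ⟨psiQ_comm Q, fun _ hx => sum_psiQ_diag Q hx, fun _ hx => sum_fderiv_psiQ_single Q hx⟩

end
end
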